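/- Let k ≥ d ≥ 1. For a k×d real matrix W, one has L(W) = 0 if and only if every row of W is a nonnegative multiple of some standard basis vector of ℝ^d and every column of W sums to 1. -/

import Mathlib

open MeasureTheory ProbabilityTheory

/-- The ReLU function. -/
noncomputable def relu (z : ℝ) : ℝ := max z 0

/-- The standard Gaussian probability measure on `ℝ^d`. -/
noncomputable def stdGaussian (d : ℕ) : Measure (Fin d → ℝ) :=
  Measure.pi fun _ => gaussianReal 0 1

/-- Euclidean inner product on `ℝ^d`. -/
noncomputable def dot {d : ℕ} (w v : Fin d → ℝ) : ℝ := ∑ j, w j * v j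

/-- The loss with target `V` the `k × d` matrix whose first `d` rows are the
standard basis vectors and whose remaining rows are zero. -/
noncomputable def loss (k d : ℕ) (W : Fin k → Fin d → ℝ) : ℝ :=
  (1 / 2) * ∫ x, ((∑ i, relu (dot (W i) x)) - ∑ j, relu (x j)) ^ 2 ∂(stdGaussian d)

/-! ### Basic facts about `relu` -/

lemma relu_nonneg (z : ℝ) : 0 ≤ relu z := le_max_right _ _

lemma relu_abs_le (z : ℝ) : |relu z| ≤ |z| := by
  rw [abs_of_nonneg (relu_nonneg z)]
  exact max_le (le_abs_self z) (abs_nonneg z)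

lemma relu_of_nonneg {z : ℝ} (h : 0 ≤ z) : relu z = z := max_eq_left h

lemma relu_eq_zero_iff {z : ℝ} : relu z = 0 ↔ z ≤ 0 := max_eq_right_iff

lemma relu_add_relu_neg (z : ℝ) : relu z + relu (-z) = |z| := by
  rcases le_total 0 z with h | h
  · rw [relu_of_nonneg h, relu_eq_zero_iff.mpr (by linarith), abs_of_nonneg h]; ring
  · rw [relu_of_nonneg (by linarith : (0:ℝ) ≤ -z), relu_eq_zero_iff.mpr h, abs_of_nonpos h]; ring

lemma continuous_relu : Continuous relu := continuous_id.max continuous_const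

lemma relu_const_mul {c : ℝ} (hc : 0 ≤ c) (z : ℝ) : relu (c * z) = c * relu z := by
  unfold relu
  rw [mul_max_of_nonneg _ _ hc, mul_zero]

/-! ### Basic facts about `dot` -/

lemma continuous_dot {d : ℕ} (w : Fin d → ℝ) : Continuous (dot w) :=
  continuous_finset_sum _ fun j _ => continuous_const.mul (continuous_apply j)

lemma dot_neg {d : ℕ} (w x : Fin d → ℝ) : dot w (-x) = -dot w x := by
  simp [dot, mul_neg, Finset.sum_neg_distrib]

lemma dot_add {d : ℕ} (w x y : Fin d → ℝ) : dot w (x + y) = dot w x + dot w y := by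
  simp [dot, mul_add, Finset.sum_add_distrib]

lemma dot_sub {d : ℕ} (w x y : Fin d → ℝ) : dot w (x - y) = dot w x - dot w y := by
  simp [dot, mul_sub, Finset.sum_sub_distrib]

lemma dot_smul {d : ℕ} (w x : Fin d → ℝ) (t : ℝ) : dot w (t • x) = t * dot w x := by
  simp [dot, Finset.mul_sum, mul_left_comm]

lemma dot_single {d : ℕ} (w : Fin d → ℝ) (j : Fin d) : dot w (Pi.single j 1) = w j := by
  simp [dot, Pi.single_apply]

lemma single_dot {d : ℕ} (c : ℝ) (j : Fin d) (x : Fin d → ℝ) :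
    dot (c • (Pi.single j 1 : Fin d → ℝ)) x = c * x j := by
  simp [dot, Pi.smul_apply, Pi.single_apply, ite_mul, mul_ite]

/-! ### Elementary absolute value lemmas -/

lemma two_abs_le (a b : ℝ) : 2 * |a| ≤ |a + b| + |a - b| := by
  have h : |(a + b) + (a - b)| ≤ |a + b| + |a - b| := abs_add_le _ _
  have h2 : (a + b) + (a - b) = 2 * a := by ring
  rw [h2, abs_mul, abs_two] at h
  exact h

lemma abs_add_abs_sub_of_lt {a b : ℝ} (h : |b| < |a|) : |a + b| + |a - b| = 2 * |a| := by
  rcases le_or_gt 0 a with ha | ha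
  · rw [abs_of_nonneg ha] at h
    obtain ⟨h1, h2⟩ := abs_lt.mp h
    rw [abs_of_nonneg ha, abs_of_pos (by linarith), abs_of_pos (by linarith)]; ring
  · rw [abs_of_neg ha] at h
    obtain ⟨h1, h2⟩ := abs_lt.mp h
    rw [abs_of_neg ha, abs_of_neg (by linarith), abs_of_neg (by linarith)]; ring

/-! ### Row structure from the absolute-value identity -/

lemma row_structure {d k : ℕ} (hd : 1 ≤ d) (W : Fin k → Fin d → ℝ)
    (Habs : ∀ x : Fin d → ℝ, ∑ i, |dot (W i) x| = ∑ j, |x j|) (i₀ : Fin k) :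
    ∃ p : Fin d, ∀ q : Fin d, q ≠ p → W i₀ q = 0 := by
  classical
  by_contra hcon
  push_neg at hcon
  set w := W i₀ with hw
  obtain ⟨p, -, hp⟩ := hcon ⟨0, hd⟩
  obtain ⟨q, hqp, hq⟩ := hcon p
  -- choose s so that the sum below is nonzero
  have hAs : ∃ s : ℝ, s ≠ 0 ∧
      (∑ j ∈ Finset.univ.erase p, w j * (if j = q then s else 1)) ≠ 0 := by
    set A := ∑ j ∈ (Finset.univ.erase p).erase q, w j with hA
    have hsum : ∀ s : ℝ,
        (∑ j ∈ Finset.univ.erase p, w j * (if j = q then s else 1)) = A + w q * s := by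
      intro s
      rw [← Finset.sum_erase_add _ _ (Finset.mem_erase.mpr ⟨hqp, Finset.mem_univ q⟩)]
      rw [if_pos rfl]
      congr 1
      refine Finset.sum_congr rfl fun j hj => ?_
      rw [if_neg (Finset.ne_of_mem_erase hj), mul_one]
    by_cases h1 : A + w q * 1 = 0
    · refine ⟨2, two_ne_zero, ?_⟩
      rw [hsum]
      intro h2
      exact hq (by linarith)
    · exact ⟨1, one_ne_zero, by rw [hsum]; exact h1⟩
  obtain ⟨s, hs0, hT⟩ := hAs
  set T := ∑ j ∈ Finset.univ.erase p, w j * (if j = q then s else 1) with hTdef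
  set x₀ : Fin d → ℝ := fun j => if j = p then -T / w p else if j = q then s else 1 with hx₀
  have hx₀p : x₀ p = -T / w p := by simp [hx₀]
  have hx₀q : x₀ q = s := by simp [hx₀, hqp]
  have hx₀o : ∀ j, j ≠ p → j ≠ q → x₀ j = 1 := by
    intro j h1 h2; simp [hx₀, h1, h2]
  have hx₀ne : ∀ j, x₀ j ≠ 0 := by
    intro j
    rcases eq_or_ne j p with rfl | h1
    · rw [hx₀p]
      exact div_ne_zero (neg_ne_zero.mpr hT) hp
    · rcases eq_or_ne j q with rfl | h2
      · rw [hx₀q]; exact hs0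
      · rw [hx₀o j h1 h2]; exact one_ne_zero
  have hdot0 : dot w x₀ = 0 := by
    rw [dot, ← Finset.sum_erase_add _ _ (Finset.mem_univ p)]
    have h1 : ∑ j ∈ Finset.univ.erase p, w j * x₀ j = T := by
      rw [hTdef]
      refine Finset.sum_congr rfl fun j hj => ?_
      have hjp := Finset.ne_of_mem_erase hj
      rcases eq_or_ne j q with rfl | hjq
      · rw [hx₀q, if_pos rfl]
      · rw [hx₀o j hjp hjq, if_neg hjq]
    rw [h1, hx₀p, mul_comm, div_mul_cancel₀ _ hp]
    ring
  -- choose a small positive t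
  have hne : (Finset.univ : Finset (Fin d)).Nonempty := ⟨p, Finset.mem_univ p⟩
  set m := Finset.univ.inf' hne (fun j => |x₀ j|) with hm
  have hm0 : 0 < m := by
    rw [hm]
    exact (Finset.lt_inf'_iff _).2 fun j _ => abs_pos.mpr (hx₀ne j)
  set M := Finset.univ.sup' hne (fun j => |w j|) with hM
  have hM0 : 0 < M + 1 := by
    have : (0:ℝ) ≤ M :=
      le_trans (abs_nonneg (w p)) (Finset.le_sup' (fun j => |w j|) (Finset.mem_univ p))
    linarith
  set t := m / (M + 1) with ht
  have ht0 : 0 < t := div_pos hm0 hM0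
  have hsmall : ∀ j, |t * w j| < |x₀ j| := by
    intro j
    rw [abs_mul, abs_of_pos ht0]
    calc t * |w j| ≤ t * M :=
          mul_le_mul_of_nonneg_left (Finset.le_sup' (fun j => |w j|) (Finset.mem_univ j)) ht0.le
      _ < t * (M + 1) := mul_lt_mul_of_pos_left (lt_add_one M) ht0
      _ = m := by rw [ht]; field_simp
      _ ≤ |x₀ j| := Finset.inf'_le _ (Finset.mem_univ j)
  -- the contradiction
  have hsum1 : ∑ i, |dot (W i) (x₀ + t • w)| = ∑ j, |x₀ j + t * w j| := by
    rw [Habs]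
    exact Finset.sum_congr rfl fun j _ => by simp
  have hsum2 : ∑ i, |dot (W i) (x₀ - t • w)| = ∑ j, |x₀ j - t * w j| := by
    rw [Habs]
    exact Finset.sum_congr rfl fun j _ => by simp
  have hE1 : ∑ j, (|x₀ j + t * w j| + |x₀ j - t * w j|) = 2 * ∑ j, |x₀ j| := by
    rw [Finset.mul_sum]
    exact Finset.sum_congr rfl fun j _ => abs_add_abs_sub_of_lt (hsmall j)
  have hww : 0 < dot w w := by
    have h1 : w p * w p ≤ dot w w :=
      Finset.single_le_sum (fun j _ => mul_self_nonneg (w j)) (Finset.mem_univ p)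
    exact lt_of_lt_of_le (mul_self_pos.mpr hp) h1
  have hlt : 2 * ∑ j, |x₀ j| < 2 * ∑ j, |x₀ j| := by
    calc 2 * ∑ j, |x₀ j| = 2 * ∑ i, |dot (W i) x₀| := by rw [Habs x₀]
      _ = ∑ i, 2 * |dot (W i) x₀| := by rw [Finset.mul_sum]
      _ < ∑ i, (|dot (W i) x₀ + t * dot (W i) w| + |dot (W i) x₀ - t * dot (W i) w|) := by
          refine Finset.sum_lt_sum (fun i _ => two_abs_le _ _) ⟨i₀, Finset.mem_univ i₀, ?_⟩
          rw [← hw, hdot0]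
          simp only [abs_zero, mul_zero, zero_add, zero_sub, abs_neg]
          rw [abs_of_pos (mul_pos ht0 hww)]
          linarith [mul_pos ht0 hww]
      _ = ∑ i, |dot (W i) (x₀ + t • w)| + ∑ i, |dot (W i) (x₀ - t • w)| := by
          rw [← Finset.sum_add_distrib]
          refine Finset.sum_congr rfl fun i _ => ?_
          rw [dot_add, dot_sub, dot_smul]
      _ = ∑ j, |x₀ j + t * w j| + ∑ j, |x₀ j - t * w j| := by rw [hsum1, hsum2]
      _ = 2 * ∑ j, |x₀ j| := by rw [← Finset.sum_add_distrib, hE1]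
  exact lt_irrefl _ hlt

/-! ### The pointwise characterization -/

lemma pointwise_iff {k d : ℕ} (hd : 1 ≤ d) (W : Fin k → Fin d → ℝ) :
    (∀ x : Fin d → ℝ, (∑ i, relu (dot (W i) x)) = ∑ j, relu (x j)) ↔
      ((∀ i, ∃ j : Fin d, ∃ c : ℝ, 0 ≤ c ∧ W i = c • (Pi.single j 1 : Fin d → ℝ)) ∧
        ∀ j, ∑ i, W i j = 1) := by
  classical
  constructor
  · intro H
    have hnn : ∀ i j, 0 ≤ W i j := by
      intro i j
      have h1 := H (-(Pi.single j 1))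
      have hrhs : ∑ j', relu ((-(Pi.single j 1 : Fin d → ℝ)) j') = 0 := by
        refine Finset.sum_eq_zero fun j' _ => ?_
        rw [relu_eq_zero_iff]
        by_cases hj : j' = j <;> simp [hj, Pi.single_apply]
      rw [hrhs] at h1
      have h2 := (Finset.sum_eq_zero_iff_of_nonneg
        (fun i _ => relu_nonneg _)).mp h1 i (Finset.mem_univ i)
      rw [dot_neg, relu_eq_zero_iff, dot_single] at h2
      linarith
    have hcol : ∀ j, ∑ i, W i j = 1 := by
      intro j
      have h1 := H (Pi.single j 1)
      have hrhs : ∑ j', relu ((Pi.single j 1 : Fin d → ℝ) j') = 1 := by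
        have : ∀ j', relu ((Pi.single j 1 : Fin d → ℝ) j') = if j' = j then 1 else 0 := by
          intro j'
          by_cases hj : j' = j <;> simp [hj, Pi.single_apply, relu]
        simp [this]
      rw [hrhs] at h1
      rw [← h1]
      refine Finset.sum_congr rfl fun i _ => ?_
      rw [dot_single, relu_of_nonneg (hnn i j)]
    have Habs : ∀ x, ∑ i, |dot (W i) x| = ∑ j, |x j| := by
      intro x
      have h1 := H x
      have h2 := H (-x)
      simp only [dot_neg, Pi.neg_apply] at h2
      have h3 : ∑ i, (relu (dot (W i) x) + relu (-(dot (W i) x)))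
          = ∑ j, (relu (x j) + relu (-(x j))) := by
        rw [Finset.sum_add_distrib, Finset.sum_add_distrib, h1, h2]
      simpa only [relu_add_relu_neg] using h3
    refine ⟨fun i => ?_, hcol⟩
    obtain ⟨p, hp⟩ := row_structure hd W Habs i
    refine ⟨p, W i p, hnn i p, funext fun q => ?_⟩
    rcases eq_or_ne q p with rfl | hqp
    · simp [Pi.single_apply]
    · simp [Pi.single_apply, hqp, hp q hqp]
  · rintro ⟨hrow, hcol⟩ x
    have hterm : ∀ i, relu (dot (W i) x) = ∑ j, W i j * relu (x j) := by
      intro i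
      obtain ⟨j, c, hc, hWi⟩ := hrow i
      rw [hWi, single_dot, relu_const_mul hc]
      symm
      simp [Pi.smul_apply, Pi.single_apply, ite_mul, mul_ite]
    calc (∑ i, relu (dot (W i) x)) = ∑ i, ∑ j, W i j * relu (x j) :=
          Finset.sum_congr rfl fun i _ => hterm i
      _ = ∑ j, (∑ i, W i j) * relu (x j) := by
          rw [Finset.sum_comm]
          exact Finset.sum_congr rfl fun j _ => (Finset.sum_mul _ _ _).symm
      _ = ∑ j, relu (x j) := by simp [hcol]

/-! ### Measure-theoretic ingredients -/

lemma integrable_sq_gaussian : Integrable (fun x : ℝ => x ^ 2) (gaussianReal 0 1) := by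
  rw [gaussianReal_of_var_ne_zero 0 one_ne_zero, gaussianPDF_def,
    integrable_withDensity_iff_integrable_smul'
      ((measurable_gaussianPDFReal 0 1).ennreal_ofReal)
      (Filter.Eventually.of_forall fun x => ENNReal.ofReal_lt_top)]
  have h := (integrable_rpow_mul_exp_neg_mul_sq (b := 1/2) (by norm_num)
    (s := 2) (by norm_num)).const_mul ((Real.sqrt (2 * Real.pi))⁻¹)
  refine h.congr (Filter.Eventually.of_forall fun x => ?_)
  show _ = (ENNReal.ofReal (gaussianPDFReal 0 1 x)).toReal • x ^ 2
  rw [smul_eq_mul, ENNReal.toReal_ofReal (gaussianPDFReal_nonneg 0 1 x)]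
  simp only [gaussianPDFReal]
  norm_num
  ring_nf

lemma measurePreserving_eval_gauss {d : ℕ} (j : Fin d) :
    MeasurePreserving (Function.eval j) (stdGaussian d) (gaussianReal 0 1) := by
  refine ⟨measurable_pi_apply j, ?_⟩
  ext s hs
  rw [Measure.map_apply (measurable_pi_apply j) hs, _root_.stdGaussian, ← Set.univ_pi_update_univ,
    Measure.pi_pi]
  simp [Function.update, apply_ite, Finset.prod_ite_eq]

lemma memLp_coord {d : ℕ} (j : Fin d) :
    MemLp (fun x : Fin d → ℝ => x j) 2 (stdGaussian d) := by
  have h1 : MemLp (id : ℝ → ℝ) 2 (gaussianReal 0 1) :=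
    (memLp_two_iff_integrable_sq aestronglyMeasurable_id).mpr
      (by simpa using integrable_sq_gaussian)
  exact h1.comp_measurePreserving (measurePreserving_eval_gauss j)

lemma memLp_F {k d : ℕ} (W : Fin k → Fin d → ℝ) :
    MemLp (fun x : Fin d → ℝ => (∑ i, relu (dot (W i) x)) - ∑ j, relu (x j)) 2
      (stdGaussian d) := by
  have hdot : ∀ w : Fin d → ℝ, MemLp (fun x : Fin d → ℝ => dot w x) 2 (stdGaussian d) := by
    intro w
    have h : MemLp (fun x : Fin d → ℝ => ∑ j, w j * x j) 2 (stdGaussian d) :=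
      memLp_finset_sum _ fun j _ => (memLp_coord j).const_mul (w j)
    simpa [dot] using h
  have hrelu : ∀ w : Fin d → ℝ,
      MemLp (fun x : Fin d → ℝ => relu (dot w x)) 2 (stdGaussian d) := by
    intro w
    refine (hdot w).of_le
      ((continuous_relu.comp (continuous_dot w)).aestronglyMeasurable) ?_
    exact Filter.Eventually.of_forall fun x => by
      simpa [Real.norm_eq_abs] using relu_abs_le (dot w x)
  have h1 : MemLp (fun x : Fin d → ℝ => ∑ i, relu (dot (W i) x)) 2 (stdGaussian d) :=
    memLp_finset_sum _ fun i _ => hrelu (W i)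
  have h2 : MemLp (fun x : Fin d → ℝ => ∑ j, relu (x j)) 2 (stdGaussian d) := by
    refine memLp_finset_sum _ fun j _ => (memLp_coord j).of_le
      ((continuous_relu.comp (continuous_apply j)).aestronglyMeasurable) ?_
    exact Filter.Eventually.of_forall fun x => by
      simpa [Real.norm_eq_abs] using relu_abs_le (x j)
  exact h1.sub h2

instance : (gaussianReal 0 1).IsOpenPosMeasure := by
  refine ⟨fun U hU hne h0 => ?_⟩
  exact (hU.measure_pos volume hne).ne'
    ((gaussianReal_absolutelyContinuous' 0 one_ne_zero) h0)

instance (d : ℕ) : (stdGaussian d).IsOpenPosMeasure := by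
  unfold _root_.stdGaussian; infer_instance

lemma loss_eq_zero_iff (k d : ℕ) (W : Fin k → Fin d → ℝ) :
    loss k d W = 0 ↔
      ∀ x : Fin d → ℝ, (∑ i, relu (dot (W i) x)) = ∑ j, relu (x j) := by
  set F := fun x : Fin d → ℝ => (∑ i, relu (dot (W i) x)) - ∑ j, relu (x j) with hF
  have hFc : Continuous F :=
    (continuous_finset_sum _ fun i _ => continuous_relu.comp (continuous_dot (W i))).sub
      (continuous_finset_sum _ fun j _ => continuous_relu.comp (continuous_apply j))
  have hint : Integrable (fun x => F x ^ 2) (stdGaussian d) := (memLp_F W).integrable_sq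
  constructor
  · intro h
    have h2 : ∫ x, F x ^ 2 ∂(stdGaussian d) = 0 := by
      rw [loss] at h; linarith
    have h3 := (integral_eq_zero_iff_of_nonneg (fun x => sq_nonneg (F x)) hint).mp h2
    have h4 : (fun x => F x ^ 2) = fun _ => (0:ℝ) :=
      (Continuous.ae_eq_iff_eq (stdGaussian d) (hFc.pow 2) continuous_const).mp h3
    intro x
    have h5 : F x ^ 2 = 0 := congrFun h4 x
    have h6 : F x = 0 := sq_eq_zero_iff.mp h5
    exact sub_eq_zero.mp h6
  · intro h
    have hzero : ∀ x : Fin d → ℝ,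
        ((∑ i, relu (dot (W i) x)) - ∑ j, relu (x j)) ^ 2 = 0 := fun x => by
      rw [sub_eq_zero.mpr (h x)]; norm_num
    rw [loss]
    simp [hzero]

/-- `L(W) = 0` iff every row of `W` is a nonnegative multiple of a standard basis
vector of `ℝ^d` and every column of `W` sums to `1`. -/
theorem stmt6 (k d : ℕ) (hd : 1 ≤ d) (hkd : d ≤ k) (W : Fin k → Fin d → ℝ) :
    loss k d W = 0 ↔
      ((∀ i, ∃ j : Fin d, ∃ c : ℝ, 0 ≤ c ∧ W i = c • (Pi.single j 1 : Fin d → ℝ)) ∧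
        ∀ j, ∑ i, W i j = 1) := by
  rw [loss_eq_zero_iff]
  exact pointwise_iff hd W
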